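/- arXiv:1511.07252 — 7 statements merged into one kernel-verified Lean document; each statement's English description precedes it below -/
import Mathlib

section
/- Let p be a prime p and m > n ≥ 1 integers. In the metacyclic group G presented by generators x, y with relations x^(p^m) = 1, y^(p^n) = 1, y⁻¹xy = x^(1+p^(m-n)), the order of the element x^i * y^j equals the maximum of the orders of x^i and y^j. -/
/-!
Conjugation by `y ^ j` raises `x ^ i` to the power `q = r ^ j`, where `r = 1 + p ^ (m - n)`,
so `(x ^ i * y ^ j) ^ k = y ^ (j * k) * x ^ (i * q * (1 + q + ⋯ + q ^ (k - 1)))`. Since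
`q ≡ 1 [MOD p]` and `p` is odd, lifting the exponent shows that the geometric sum has the same
`p`-adic valuation as `k`. Together with `⟨x⟩ ∩ ⟨y⟩ = 1` this makes the order of `x ^ i * y ^ j`
the lcm of the orders of `x ^ i` and `y ^ j`, and the lcm of two powers of `p` is the larger one.
-/

open Finset

theorem padicValNat_geom_sum {p q k : ℕ} [Fact p.Prime] (hp : Odd p) (hq : q ≡ 1 [MOD p])
    (hk : k ≠ 0) : padicValNat p (∑ t ∈ range k, q ^ t) = padicValNat p k := by
  have hpq : ¬p ∣ q := (Nat.Prime.coprime_iff_not_dvd Fact.out).1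
    (Nat.coprime_of_mul_modEq_one 1 (by simpa using hq)).symm
  obtain rfl | hq1 : q = 1 ∨ 1 < q := by
    rcases Nat.eq_zero_or_pos q with rfl | h
    · exact absurd (dvd_zero p) hpq
    · omega
  · simp
  have hlte := padicValNat.pow_sub_pow hp hq1 (by simpa using hq.symm.dvd') hpq hk
  rw [one_pow, ← geom_sum_mul_of_one_le hq1.le,
    padicValNat.mul (geom_sum_pos (Nat.zero_le q) hk).ne' (by omega)] at hlte
  omega

theorem pow_dvd_geom_sum_iff {p q k : ℕ} [Fact p.Prime] (hp : Odd p) (hq : q ≡ 1 [MOD p])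
    (c : ℕ) : p ^ c ∣ ∑ t ∈ range k, q ^ t ↔ p ^ c ∣ k := by
  rcases eq_or_ne k 0 with rfl | hk
  · simp
  rw [padicValNat_dvd_iff_le (geom_sum_pos (Nat.zero_le q) hk).ne', padicValNat_dvd_iff_le hk,
    padicValNat_geom_sum hp hq hk]

theorem Nat.lcm_pow_pow {p : ℕ} (hp : 0 < p) (a b : ℕ) :
    Nat.lcm (p ^ a) (p ^ b) = max (p ^ a) (p ^ b) := by
  rcases le_total a b with h | h
  · rw [Nat.lcm_eq_right (Nat.pow_dvd_pow p h), max_eq_right (Nat.pow_le_pow_right hp h)]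
  · rw [Nat.lcm_eq_left (Nat.pow_dvd_pow p h), max_eq_left (Nat.pow_le_pow_right hp h)]

theorem Subgroup.mul_eq_one_iff_of_disjoint {G : Type*} [Group G] {H K : Subgroup G}
    (h : Disjoint H K) {a b : G} (ha : a ∈ H) (hb : b ∈ K) : a * b = 1 ↔ a = 1 ∧ b = 1 :=
  ⟨disjoint_iff_mul_eq_one.1 h ha hb, fun ⟨ha1, hb1⟩ => by rw [ha1, hb1, one_mul]⟩

section Conjugation

variable {G : Type*} [Group G] {x y : G} {r : ℕ}

theorem inv_mul_pow_mul_of_inv_mul_mul (h : y⁻¹ * x * y = x ^ r) (i : ℕ) :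
    y⁻¹ * x ^ i * y = (x ^ i) ^ r :=
  calc y⁻¹ * x ^ i * y = (y⁻¹ * x * y) ^ i := by simpa using (conj_pow (a := y⁻¹)).symm
    _ = (x ^ i) ^ r := by rw [h, ← pow_mul, ← pow_mul, mul_comm]

theorem inv_pow_mul_pow_mul_pow_of_inv_mul_mul (h : y⁻¹ * x * y = x ^ r) (i j : ℕ) :
    (y ^ j)⁻¹ * x ^ i * y ^ j = (x ^ i) ^ (r ^ j) := by
  induction j with
  | zero => simp
  | succ j ih =>
    calc (y ^ (j + 1))⁻¹ * x ^ i * y ^ (j + 1) = y⁻¹ * ((y ^ j)⁻¹ * x ^ i * y ^ j) * y := by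
          group
      _ = (x ^ i) ^ r ^ (j + 1) := by
          rw [ih, ← pow_mul, inv_mul_pow_mul_of_inv_mul_mul h, ← pow_mul, ← pow_mul, pow_succ,
            mul_assoc]

theorem mul_pow_of_inv_mul_mul (h : y⁻¹ * x * y = x ^ r) (k : ℕ) :
    (x * y) ^ k = y ^ k * x ^ (r * ∑ t ∈ range k, r ^ t) := by
  induction k with
  | zero => simp
  | succ k ih =>
    calc (x * y) ^ (k + 1) = y ^ (k + 1) * (y⁻¹ * x ^ (r * ∑ t ∈ range k, r ^ t + 1) * y) := by
          rw [pow_succ, ih, pow_succ]; group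
      _ = y ^ (k + 1) * x ^ (r * ∑ t ∈ range (k + 1), r ^ t) := by
          rw [inv_mul_pow_mul_of_inv_mul_mul h, ← pow_mul, geom_sum_succ, mul_comm]

end Conjugation

theorem stmt_1_general (p m n : ℕ) (hp : p.Prime) (hodd : Odd p) (hmn : n < m)
    {G : Type*} [Group G] (x y : G)
    (hx : orderOf x = p ^ m) (hy : orderOf y = p ^ n)
    (hconj : y⁻¹ * x * y = x ^ (1 + p ^ (m - n)))
    (hdisj : Subgroup.zpowers x ⊓ Subgroup.zpowers y = ⊥) :
    ∀ i j : ℕ, orderOf (x ^ i * y ^ j) = max (orderOf (x ^ i)) (orderOf (y ^ j)) := by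
  intro i j
  have : Fact p.Prime := ⟨hp⟩
  have hq : (1 + p ^ (m - n)) ^ j ≡ 1 [MOD p] := by
    simpa using ((Nat.modEq_zero_iff_dvd.2 (dvd_pow_self p (by omega : m - n ≠ 0))).add_left 1).pow j
  obtain ⟨a, -, ha⟩ := (Nat.dvd_prime_pow hp).1 (hx ▸ orderOf_pow_dvd (x := x) i)
  obtain ⟨b, -, hb⟩ := (Nat.dvd_prime_pow hp).1 (hy ▸ orderOf_pow_dvd (x := y) j)
  have hcop : Nat.Coprime (p ^ a) ((1 + p ^ (m - n)) ^ j) :=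
    (Nat.coprime_of_mul_modEq_one 1 (by simpa using hq)).symm.pow_left a
  have hdvd (k : ℕ) : orderOf (x ^ i * y ^ j) ∣ k ↔ orderOf (x ^ i) ∣ k ∧ orderOf (y ^ j) ∣ k := by
    rw [orderOf_dvd_iff_pow_eq_one,
      mul_pow_of_inv_mul_mul (inv_pow_mul_pow_mul_pow_of_inv_mul_mul hconj i j),
      Subgroup.mul_eq_one_iff_of_disjoint (disjoint_iff.2 hdisj).symm
        (Subgroup.pow_mem _ (Subgroup.npow_mem_zpowers y j) k)
        (Subgroup.pow_mem _ (Subgroup.npow_mem_zpowers x i) _),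
      ← orderOf_dvd_iff_pow_eq_one, ← orderOf_dvd_iff_pow_eq_one, ha, hcop.dvd_mul_left,
      pow_dvd_geom_sum_iff hodd hq, and_comm]
  rw [Nat.dvd_right_iff_eq.1 fun k => (hdvd k).trans Nat.lcm_dvd_iff.symm, ha, hb,
    Nat.lcm_pow_pow hp.pos]

/-- In the split metacyclic `p`-group
`G = ⟨x, y ∣ x^(p^m) = y^(p^n) = 1, x^y = x^(1+p^(m-n))⟩` with `m > n ≥ 1`,
the order of `x^i * y^j` equals the maximum of the orders of `x^i` and `y^j`. -/
theorem stmt_1 (p m n : ℕ) (hp : p.Prime) (hodd : Odd p) (hn : 1 ≤ n) (hmn : n < m)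
    {G : Type*} [Group G] [Finite G] (x y : G)
    (hx : orderOf x = p ^ m) (hy : orderOf y = p ^ n)
    (hconj : y⁻¹ * x * y = x ^ (1 + p ^ (m - n)))
    (hdisj : Subgroup.zpowers x ⊓ Subgroup.zpowers y = ⊥)
    (hgen : Subgroup.closure {x, y} = ⊤) :
    ∀ i j : ℕ, orderOf (x ^ i * y ^ j) = max (orderOf (x ^ i)) (orderOf (y ^ j)) :=
  stmt_1_general p m n hp hodd hmn x y hx hy hconj hdisj
end

section
/- If f: ℤ/nℤ → ℤ/nℤ is a permutation with f(0) = 0 such that the subgroup of Sym(ℤ/nℤ) generated by the translation t: x ↦ x+1 and f has order n times the order of f, then f is a skew-morphism of ℤ/nℤ. -/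
/-- A bijection `f` of `ℤ/nℤ` is a skew-morphism if `f 0 = 0` and there is a
power function `π` with `f (x+y) = f x + f^(π x) y` for all `x, y`. -/
def IsSkewMorphism {n : ℕ} (f : Equiv.Perm (ZMod n)) : Prop :=
  f 0 = 0 ∧ ∃ π : ZMod n → ℤ, ∀ x y : ZMod n, f (x + y) = f x + (f ^ π x) y

/-!
The group `G = ⟨t, f⟩` contains every translation, so it acts transitively on `ℤ/nℤ` and by
orbit–stabilizer the stabilizer of `0` has order `n * |f| / n = |f|`. It contains `⟨f⟩`, hence
equals it. For each `x`, the permutation `t_{f x}⁻¹ ∘ f ∘ t_x` lies in `G` and fixes `0`, so it is a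
power `f ^ π x`, which is exactly the identity `f (x + y) = f x + f ^ (π x) y`.
-/

open MulAction Subgroup in
theorem MulAction.stabilizer_eq_zpowers_of_card_eq {G α : Type*} [Group G] [MulAction G α]
    [IsPretransitive G α] [Finite G] {a : α} {g : G} (hg : g • a = a)
    (hcard : Nat.card G = Nat.card α * orderOf g) : stabilizer G a = zpowers g := by
  have hle : zpowers g ≤ stabilizer G a := zpowers_le.mpr hg
  have horbit_stab : Nat.card (stabilizer G a) * Nat.card α = Nat.card α * orderOf g := by
    have := card_mul_index (stabilizer G a)
    rwa [index_stabilizer_of_transitive, hcard] at this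
  have hα : 0 < Nat.card α := by
    refine Nat.pos_of_ne_zero fun h => ?_
    rw [h, zero_mul] at hcard
    exact Nat.card_pos.ne' hcard
  have hcard_stab : Nat.card (stabilizer G a) = orderOf g :=
    Nat.eq_of_mul_eq_mul_left hα (by rw [mul_comm, horbit_stab])
  exact (eq_of_le_of_card_ge hle (by rw [hcard_stab, Nat.card_zpowers])).symm

theorem Equiv.addLeft_zpow {A : Type*} [AddGroup A] (a : A) (k : ℤ) :
    Equiv.addLeft a ^ k = Equiv.addLeft (k • a) :=
  (map_zsmul (AddAction.toPermHom A A) k a).symm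

theorem ZMod.addLeft_mem_zpowers_addLeft_one {n : ℕ} (a : ZMod n) :
    Equiv.addLeft a ∈ Subgroup.zpowers (Equiv.addLeft (1 : ZMod n)) :=
  ⟨a.cast, by dsimp only; rw [Equiv.addLeft_zpow, zsmul_one, ZMod.intCast_zmod_cast]⟩

theorem ZMod.addLeft_mem_closure_insert_addLeft_one {n : ℕ} (a : ZMod n)
    (s : Set (Equiv.Perm (ZMod n))) :
    Equiv.addLeft a ∈ Subgroup.closure (insert (Equiv.addLeft 1) s) :=
  Subgroup.zpowers_le.mpr (Subgroup.subset_closure (Set.mem_insert _ _))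
    (ZMod.addLeft_mem_zpowers_addLeft_one a)

open Subgroup in
theorem isSkewMorphism_iff {n : ℕ} (f : Equiv.Perm (ZMod n)) :
    IsSkewMorphism f ↔
      f 0 = 0 ∧ ∀ x, (Equiv.addLeft (f x))⁻¹ * f * Equiv.addLeft x ∈ zpowers f := by
  refine and_congr_right fun _ => ?_
  simp only [mem_zpowers_iff, Equiv.ext_iff, Equiv.Perm.mul_apply, Equiv.Perm.eq_inv_iff_eq,
    Equiv.coe_addLeft, eq_comm (b := f (_ + _))]
  exact (Classical.skolem (p := fun x k => ∀ y, f (x + y) = f x + (f ^ k) y)).symm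

open MulAction Subgroup in
theorem ZMod.mem_zpowers_of_mem_closure_addLeft_one {n : ℕ} [NeZero n]
    {f g : Equiv.Perm (ZMod n)} (hf0 : f 0 = 0)
    (hcard : Nat.card (closure {Equiv.addLeft (1 : ZMod n), f}) = n * orderOf f)
    (hg : g ∈ closure {Equiv.addLeft (1 : ZMod n), f}) (hg0 : g 0 = 0) : g ∈ zpowers f := by
  set G := closure {Equiv.addLeft (1 : ZMod n), f}
  have hfG : f ∈ G := subset_closure (Set.mem_insert_of_mem _ rfl)
  have : IsPretransitive G (ZMod n) :=
    ⟨fun x y => ⟨⟨_, addLeft_mem_closure_insert_addLeft_one (y - x) _⟩, sub_add_cancel y x⟩⟩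
  have hstab : stabilizer G (0 : ZMod n) = zpowers ⟨f, hfG⟩ :=
    stabilizer_eq_zpowers_of_card_eq hf0 (by rw [hcard, Nat.card_zmod, Subgroup.orderOf_mk])
  have hg_stab : (⟨g, hg⟩ : G) ∈ stabilizer G (0 : ZMod n) := hg0
  rw [hstab] at hg_stab
  obtain ⟨k, hk⟩ := hg_stab
  exact ⟨k, congrArg Subtype.val hk⟩

/-- If `f` is a permutation of `ℤ/nℤ` fixing `0` such that the subgroup generated
by the translation `t : x ↦ x + 1` and `f` has order `n * |f|`, then `f` is a
skew-morphism of `ℤ/nℤ`. -/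
theorem stmt_3 (n : ℕ) (hn : 0 < n) (f : Equiv.Perm (ZMod n)) (hf0 : f 0 = 0)
    (hcard : Nat.card (Subgroup.closure {Equiv.addLeft (1 : ZMod n), f}) = n * orderOf f) :
    IsSkewMorphism f := by
  have : NeZero n := ⟨hn.ne'⟩
  have hfG : f ∈ Subgroup.closure {Equiv.addLeft (1 : ZMod n), f} :=
    Subgroup.subset_closure (Set.mem_insert_of_mem _ rfl)
  refine (isSkewMorphism_iff f).mpr ⟨hf0, fun x => ?_⟩
  apply ZMod.mem_zpowers_of_mem_closure_addLeft_one hf0 hcard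
  · exact mul_mem (mul_mem (inv_mem (ZMod.addLeft_mem_closure_insert_addLeft_one _ _)) hfG)
      (ZMod.addLeft_mem_closure_insert_addLeft_one _ _)
  · simp
end

section
/- If f is a skew-morphism of ℤ/nℤ whose order is coprime to n, then f is an automorphism of ℤ/nℤ, i.e., f(x+y) = f(x) + f(y) for all x, y. -/
/-!
Let `T ≅ ℤ/nℤ` be the group of translations `tₓ` of `ℤ/nℤ` and `C = ⟨f⟩`. The skew-morphism
identity reads `f tₓ = t_{f x} f^{π x}`, so `C T ⊆ T C` and `G = T ⊔ C` equals the product `T C`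
of two abelian subgroups of coprime orders; `C` fixes `0`, so its normal core in `G` is trivial.
By Itô's argument `N = ⁅T, C⁆` is abelian and normal in `G`. The elements of `N` killed by `|C|`
form a normal subgroup of order prime to `[G : C] = |T|`, so it lies in `C` and is trivial. Hence
`|N|` is prime to `[G : T] = |C|`, which forces `N ≤ T`. So `T` is normal in `G`: every
`f tₓ f⁻¹` is a translation, necessarily `t_{f x}`, and that is the additivity of `f`.
-/

open Subgroup Pointwise Equiv
open scoped commutatorElement

namespace Subgroup

variable {G : Type*} [Group G]

theorem closure_normal_of_forall_conj_mem {s : Set G} (hs : ∀ g, ∀ x ∈ s, g * x * g⁻¹ ∈ s) :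
    (closure s).Normal := by
  refine ⟨fun x hx g => ?_⟩
  induction hx using closure_induction with
  | mem x hx => exact subset_closure (hs g x hx)
  | one => simp
  | mul x y _ _ hx hy => simpa [mul_assoc] using mul_mem hx hy
  | inv x _ hx => simpa [mul_assoc] using inv_mem hx

section Ito

variable {A B : Subgroup G}

theorem coe_mul_coe_eq_univ_comm (h : (A : Set G) * (B : Set G) = Set.univ) :
    (B : Set G) * (A : Set G) = Set.univ := by
  rw [← Set.inv_univ, ← h, mul_inv_rev, inv_coe_set, inv_coe_set]

theorem exists_conj_commutatorElement_eq [IsMulCommutative A]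
    (hBA : (B : Set G) * (A : Set G) = Set.univ) {a y : G} (ha : a ∈ A) (hy : y ∈ B) :
    ∃ y' ∈ B, ∀ x ∈ A, a * ⁅x, y⁆ * a⁻¹ = ⁅x, y'⁆ := by
  obtain ⟨y', hy', a', ha', h⟩ := Set.eq_univ_iff_forall.mp hBA (a * y)
  refine ⟨y', hy', fun x hx => ?_⟩
  have hxa : a * x * a⁻¹ = x := by rw [setLike_mul_comm ha hx, mul_inv_cancel_right]
  have hxa' : a' * x⁻¹ * a'⁻¹ = x⁻¹ := by
    rw [setLike_mul_comm ha' (inv_mem hx), mul_inv_cancel_right]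
  obtain rfl : y = a⁻¹ * (y' * a') := by rw [show y' * a' = a * y from h, inv_mul_cancel_left]
  calc a * ⁅x, a⁻¹ * (y' * a')⁆ * a⁻¹ = (a * x * a⁻¹) * y' * (a' * x⁻¹ * a'⁻¹) * y'⁻¹ := by
        simp only [commutatorElement_def]; group
    _ = ⁅x, y'⁆ := by rw [hxa, hxa', commutatorElement_def]

theorem exists_conj_commutatorElement_eq' [IsMulCommutative B]
    (hAB : (A : Set G) * (B : Set G) = Set.univ) {b x : G} (hb : b ∈ B) (hx : x ∈ A) :
    ∃ x' ∈ A, ∀ y ∈ B, b * ⁅x, y⁆ * b⁻¹ = ⁅x', y⁆ := by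
  obtain ⟨x', hx', h⟩ := exists_conj_commutatorElement_eq hAB hb hx
  refine ⟨x', hx', fun y hy => ?_⟩
  rw [← commutatorElement_inv y x, ← commutatorElement_inv y x', ← h y hy]
  group

variable [IsMulCommutative A] [IsMulCommutative B]

theorem commute_commutatorElement (hAB : (A : Set G) * (B : Set G) = Set.univ)
    {x y u v : G} (hx : x ∈ A) (hy : y ∈ B) (hu : u ∈ A) (hv : v ∈ B) :
    Commute ⁅x, y⁆ ⁅u, v⁆ := by
  -- Conjugating by `v⁻¹`, `u⁻¹`, `v`, `u` in turn changes only one entry of the commutator at a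
  -- time, and the changes made by `v⁻¹` and `v` (resp. `u⁻¹` and `u`) undo each other.
  have hBA := coe_mul_coe_eq_univ_comm hAB
  obtain ⟨x₁, hx₁, hv₁⟩ := exists_conj_commutatorElement_eq' hAB (inv_mem hv) hx
  obtain ⟨y₁, hy₁, hu₁⟩ := exists_conj_commutatorElement_eq hBA (inv_mem hu) hy
  obtain ⟨x₂, hx₂, hv₂⟩ := exists_conj_commutatorElement_eq' hAB hv hx₁
  obtain ⟨y₂, -, hu₂⟩ := exists_conj_commutatorElement_eq hBA hu hy₁
  have hx₂x : ∀ w ∈ B, ⁅x₂, w⁆ = ⁅x, w⁆ := fun w hw => by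
    rw [← hv₂ w hw, ← hv₁ w hw]; group
  have hy₂y : ∀ w ∈ A, ⁅w, y₂⁆ = ⁅w, y⁆ := fun w hw => by
    rw [← hu₂ w hw, ← hu₁ w hw]; group
  refine (mul_inv_eq_iff_eq_mul.mp ?_).symm
  calc ⁅u, v⁆ * ⁅x, y⁆ * ⁅u, v⁆⁻¹
      = u * (v * (u⁻¹ * (v⁻¹ * ⁅x, y⁆ * v⁻¹⁻¹) * u⁻¹⁻¹) * v⁻¹) * u⁻¹ := by
        rw [commutatorElement_def u v]; group
    _ = ⁅x₂, y₂⁆ := by rw [hv₁ y hy, hu₁ x₁ hx₁, hv₂ y₁ hy₁, hu₂ x₂ hx₂]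
    _ = ⁅x, y⁆ := by rw [hy₂y x₂ hx₂, hx₂x y hy]

theorem isMulCommutative_commutator (hAB : (A : Set G) * (B : Set G) = Set.univ) :
    IsMulCommutative (⁅A, B⁆ : Subgroup G) := by
  rw [commutator_def]
  refine isMulCommutative_closure ?_
  rintro _ ⟨x, hx, y, hy, rfl⟩ _ ⟨u, hu, v, hv, rfl⟩
  exact commute_commutatorElement hAB hx hy hu hv

theorem normal_commutator (hAB : (A : Set G) * (B : Set G) = Set.univ) : ⁅A, B⁆.Normal := by
  rw [commutator_def]
  refine closure_normal_of_forall_conj_mem fun g => ?_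
  rintro _ ⟨x, hx, y, hy, rfl⟩
  obtain ⟨a, ha, b, hb, rfl⟩ := Set.eq_univ_iff_forall.mp hAB g
  obtain ⟨x', hx', hb'⟩ := exists_conj_commutatorElement_eq' hAB hb hx
  obtain ⟨y', hy', ha'⟩ := exists_conj_commutatorElement_eq (coe_mul_coe_eq_univ_comm hAB) ha hy
  refine ⟨x', hx', y', hy', ?_⟩
  rw [← ha' x' hx', ← hb' y hy]
  group

end Ito

section Coprime

variable [Finite G]

theorem relIndex_sup_right_of_normal_left (H K : Subgroup G) [H.Normal] :
    K.relIndex (H ⊔ K) = K.relIndex H := by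
  -- compute `(H ⊓ K).relIndex (H ⊔ K)` in two ways
  have h₁ := relIndex_inf_mul_relIndex K H (H ⊔ K)
  have h₂ := relIndex_inf_mul_relIndex H K (H ⊔ K)
  rw [inf_of_le_left le_sup_left, relIndex_sup_left, inf_comm] at h₁
  rw [inf_of_le_left le_sup_right] at h₂
  have : H.IsFiniteRelIndex K := isFiniteRelIndex_of_finiteIndex
  exact Nat.eq_of_mul_eq_mul_left (Nat.pos_of_ne_zero relIndex_ne_zero) (by rw [h₂, mul_comm, h₁])

theorem le_of_coprime_card_index {H K : Subgroup G} [H.Normal]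
    (h : (Nat.card H).Coprime K.index) : H ≤ K :=
  relIndex_eq_one.mp <|
    Nat.eq_one_of_dvd_coprimes h (relIndex_dvd_card K H)
      (relIndex_sup_right_of_normal_left H K ▸ relIndex_dvd_index_of_le le_sup_right)

theorem coprime_card_of_pow_eq_one_imp_eq_one {H : Subgroup G} {m : ℕ}
    (h : ∀ x ∈ H, x ^ m = 1 → x = 1) : (Nat.card H).Coprime m := by
  refine Nat.coprime_of_dvd fun p hp hpH hpm => ?_
  have := Fact.mk hp
  obtain ⟨x, hx⟩ := exists_prime_orderOf_dvd_card' p hpH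
  have hx1 : (x : G) = 1 :=
    h x x.2 (orderOf_dvd_iff_pow_eq_one.mp (by rw [orderOf_coe, hx]; exact hpm))
  rw [← orderOf_coe, hx1, orderOf_one] at hx
  exact hp.one_lt.ne hx

end Coprime

def torsionBy (N : Subgroup G) [IsMulCommutative N] (m : ℕ) : Subgroup G where
  carrier := {x | x ∈ N ∧ x ^ m = 1}
  one_mem' := ⟨N.one_mem, one_pow m⟩
  mul_mem' := fun ⟨hx, hxm⟩ ⟨hy, hym⟩ =>
    ⟨N.mul_mem hx hy, by rw [Commute.mul_pow (setLike_mul_comm hx hy), hxm, hym, one_mul]⟩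
  inv_mem' := fun ⟨hx, hxm⟩ => ⟨N.inv_mem hx, by rw [inv_pow, hxm, inv_one]⟩

instance (N : Subgroup G) [hN : N.Normal] [IsMulCommutative N] (m : ℕ) :
    (N.torsionBy m).Normal :=
  ⟨fun _ ⟨hx, hxm⟩ g => ⟨hN.conj_mem _ hx g, by rw [conj_pow, hxm, mul_one, mul_inv_cancel]⟩⟩

theorem le_left_of_isComplement' [Finite G] {A C N : Subgroup G} (hAC : IsComplement' A C)
    (hcop : (Nat.card A).Coprime (Nat.card C)) (hcore : C.normalCore = ⊥)
    [N.Normal] [IsMulCommutative N] : N ≤ A := by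
  have hQ : N.torsionBy (Nat.card C) = ⊥ := by
    have hle : N.torsionBy (Nat.card C) ≤ C := by
      refine le_of_coprime_card_index ?_
      rw [hAC.index_eq_card]
      refine coprime_card_of_pow_eq_one_imp_eq_one fun x ⟨_, hxC⟩ hxA => ?_
      simpa [hcop] using pow_gcd_eq_one.mpr ⟨hxA, hxC⟩
    rw [eq_bot_iff, ← hcore]
    exact normal_le_normalCore.mpr hle
  refine le_of_coprime_card_index ?_
  rw [hAC.symm.index_eq_card]
  refine coprime_card_of_pow_eq_one_imp_eq_one fun x hx hxC => ?_
  have hxQ : x ∈ N.torsionBy (Nat.card C) := ⟨hx, hxC⟩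
  rwa [hQ, mem_bot] at hxQ

section Product

variable {A C : Subgroup G}

theorem normal_of_commutator_le (hAC : (A : Set G) * (C : Set G) = Set.univ) (h : ⁅A, C⁆ ≤ A) :
    A.Normal := by
  refine ⟨fun x hx g => ?_⟩
  obtain ⟨a, ha, c, hc, rfl⟩ := Set.eq_univ_iff_forall.mp hAC g
  have hcx : ⁅c, x⁆ ∈ A := h (by rw [commutator_comm]; exact commutator_mem_commutator hc hx)
  have hconj : a * c * x * (a * c)⁻¹ = a * (⁅c, x⁆ * x) * a⁻¹ := by
    rw [commutatorElement_def]; group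
  rw [hconj]
  exact mul_mem (mul_mem ha (mul_mem hcx hx)) (inv_mem ha)

theorem normal_of_coprime_of_normalCore_eq_bot [Finite G] [IsMulCommutative A]
    [IsMulCommutative C] (hAC : (A : Set G) * (C : Set G) = Set.univ)
    (hcop : (Nat.card A).Coprime (Nat.card C)) (hcore : C.normalCore = ⊥) : A.Normal := by
  have := normal_commutator hAC
  have := isMulCommutative_commutator hAC
  have hcompl := isComplement'_of_disjoint_and_mul_eq_univ (disjoint_of_coprime_natCard hcop) hAC
  exact normal_of_commutator_le hAC (le_left_of_isComplement' hcompl hcop hcore)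

theorem coe_sup_of_mul_subset (h : (C : Set G) * (A : Set G) ⊆ A * C) :
    ((A ⊔ C : Subgroup G) : Set G) = A * C := by
  let S : Subgroup G :=
    { carrier := (A : Set G) * C
      one_mem' := ⟨1, A.one_mem, 1, C.one_mem, one_mul 1⟩
      mul_mem' := by
        rintro _ _ ⟨a, ha, c, hc, rfl⟩ ⟨a', ha', c', hc', rfl⟩
        obtain ⟨a'', ha'', c'', hc'', h'⟩ := h ⟨c, hc, a', ha', rfl⟩
        refine ⟨a * a'', A.mul_mem ha ha'', c'' * c', C.mul_mem hc'' hc', ?_⟩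
        simp only [mul_assoc, ← mul_assoc a'', h']
      inv_mem' := by
        rintro _ ⟨a, ha, c, hc, rfl⟩
        rw [mul_inv_rev]
        exact h ⟨c⁻¹, C.inv_mem hc, a⁻¹, A.inv_mem ha, rfl⟩ }
  refine le_antisymm (?_ : A ⊔ C ≤ S) ?_
  · exact sup_le (fun x hx => ⟨x, hx, 1, C.one_mem, mul_one x⟩)
      (fun x hx => ⟨1, A.one_mem, x, hx, one_mul x⟩)
  · rintro _ ⟨x, hx, y, hy, rfl⟩
    exact mul_mem_sup hx hy

theorem coe_subgroupOf_sup_mul_eq_univ (h : (C : Set G) * (A : Set G) ⊆ A * C) :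
    ((A.subgroupOf (A ⊔ C) : Set (A ⊔ C : Subgroup G)) * (C.subgroupOf (A ⊔ C) : Set _)) =
      Set.univ := by
  refine Set.eq_univ_of_forall fun g => ?_
  obtain ⟨x, hx, y, hy, hxy⟩ : (g : G) ∈ (A : Set G) * C := coe_sup_of_mul_subset h ▸ g.2
  exact ⟨⟨x, mem_sup_left hx⟩, hx, ⟨y, mem_sup_right hy⟩, hy, Subtype.ext hxy⟩

end Product

end Subgroup

namespace Equiv.Perm

variable {α : Type*}

def translations (α : Type*) [AddGroup α] : Subgroup (Perm α) where
  carrier := Set.range Equiv.addLeft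
  one_mem' := ⟨0, addLeft_zero⟩
  mul_mem' := by
    rintro _ _ ⟨a, rfl⟩ ⟨b, rfl⟩
    exact ⟨a + b, addLeft_add a b⟩
  inv_mem' := by
    rintro _ ⟨a, rfl⟩
    exact ⟨-a, (neg_addLeft a).symm⟩

theorem addLeft_mem_translations [AddGroup α] (a : α) : Equiv.addLeft a ∈ translations α :=
  ⟨a, rfl⟩

instance [AddCommGroup α] : IsMulCommutative (translations α) :=
  .of_setLike_mul_comm <| by
    rintro _ ⟨a, rfl⟩ _ ⟨b, rfl⟩
    rw [← addLeft_add, ← addLeft_add, add_comm]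

theorem card_translations [AddGroup α] : Nat.card (translations α) = Nat.card α :=
  Nat.card_range_of_injective fun a b h => by simpa using congr($h 0)

theorem normalCore_subgroupOf_eq_bot [AddGroup α] {L C : Subgroup (Perm α)}
    (hL : translations α ≤ L) (hC : ∀ c ∈ C, c 0 = 0) : (C.subgroupOf L).normalCore = ⊥ := by
  refine eq_bot_iff.mpr fun g hg => Subtype.ext <| Equiv.ext fun u => ?_
  have hfix := hC _ (hg ⟨Equiv.addLeft (-u), hL (addLeft_mem_translations (-u))⟩)
  exact (neg_add_eq_zero.mp (by simpa using hfix)).symm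

section SkewMorphism

variable [AddCommGroup α] {f : Perm α} {π : α → ℤ}

theorem mul_addLeft_eq (hπ : ∀ x y, f (x + y) = f x + (f ^ π x) y) (x : α) :
    f * Equiv.addLeft x = Equiv.addLeft (f x) * f ^ π x := by
  ext y
  simp [hπ x y]

theorem pow_mul_addLeft_mem (hπ : ∀ x y, f (x + y) = f x + (f ^ π x) y) (k : ℕ) (x : α) :
    f ^ k * Equiv.addLeft x ∈ (translations α : Set (Perm α)) * (zpowers f : Set (Perm α)) := by
  induction k generalizing x with
  | zero => exact ⟨Equiv.addLeft x, addLeft_mem_translations x, 1, one_mem _, by simp⟩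
  | succ k ih =>
    obtain ⟨_, ⟨y, rfl⟩, d, hd, hyd : Equiv.addLeft y * d = f ^ k * Equiv.addLeft x⟩ := ih x
    refine ⟨Equiv.addLeft (f y), addLeft_mem_translations _, f ^ π y * d,
      mul_mem (zpow_mem (mem_zpowers f) _) hd, ?_⟩
    rw [pow_succ', mul_assoc, ← hyd, ← mul_assoc, mul_addLeft_eq hπ, mul_assoc]

theorem zpowers_mul_translations_subset [Finite α]
    (hπ : ∀ x y, f (x + y) = f x + (f ^ π x) y) :
    (zpowers f : Set (Perm α)) * (translations α : Set (Perm α)) ⊆ translations α * zpowers f := by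
  rintro _ ⟨c, hc, _, ⟨x, rfl⟩, rfl⟩
  obtain ⟨k, rfl⟩ := mem_powers_iff_mem_zpowers.mpr hc
  exact pow_mul_addLeft_mem hπ k x

theorem map_add_of_coprime_orderOf [Finite α] (hf0 : f 0 = 0)
    (hπ : ∀ x y, f (x + y) = f x + (f ^ π x) y) (hcop : (orderOf f).Coprime (Nat.card α))
    (x y : α) : f (x + y) = f x + f y := by
  set L := translations α ⊔ zpowers f
  have hcard : (Nat.card ((translations α).subgroupOf L)).Coprime
      (Nat.card ((zpowers f).subgroupOf L)) := by
    rw [Nat.card_congr (subgroupOfEquivOfLe le_sup_left).toEquiv,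
      Nat.card_congr (subgroupOfEquivOfLe le_sup_right).toEquiv, card_translations,
      Nat.card_zpowers]
    exact hcop.symm
  have hcore : ((zpowers f).subgroupOf L).normalCore = ⊥ :=
    normalCore_subgroupOf_eq_bot le_sup_left fun c hc => by
      obtain ⟨k, rfl⟩ := mem_zpowers_iff.mp hc
      exact zpow_apply_eq_self_of_apply_eq_self hf0 k
  have hnormal : ((translations α).subgroupOf L).Normal :=
    normal_of_coprime_of_normalCore_eq_bot
      (coe_subgroupOf_sup_mul_eq_univ (zpowers_mul_translations_subset hπ)) hcard hcore
  obtain ⟨u, hu⟩ : f * Equiv.addLeft x * f⁻¹ ∈ translations α :=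
    hnormal.conj_mem ⟨_, mem_sup_left (addLeft_mem_translations x)⟩ (addLeft_mem_translations x)
      ⟨f, mem_sup_right (mem_zpowers f)⟩
  have hfx : Equiv.addLeft u * f = f * Equiv.addLeft x := by rw [hu, inv_mul_cancel_right]
  have hu : u = f x := by simpa [hf0] using congr($hfx 0)
  simpa [hu] using congr($hfx y).symm

end SkewMorphism

end Equiv.Perm

/-- If a skew-morphism of `ℤ/nℤ` has order coprime to `n`, then it is an
automorphism, i.e. it is additive. -/
theorem stmt_5 (n : ℕ) (hn : 0 < n) (f : Equiv.Perm (ZMod n))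
    (hf : IsSkewMorphism f) (hcop : Nat.Coprime (orderOf f) n) :
    ∀ x y : ZMod n, f (x + y) = f x + f y := by
  have : NeZero n := ⟨hn.ne'⟩
  obtain ⟨hf0, π, hπ⟩ := hf
  exact Perm.map_add_of_coprime_orderOf hf0 hπ (by rwa [Nat.card_zmod])
end

section
/- Let p be an odd prime, e ≥ 1, and let t, a ∈ Sym(ℤ/p^eℤ) be defined by t(x) = x + 1 and a(x) = (p+1)x. Then for any j with 0 ≤ j < p^(e-1), the permutation t∘a^j has order p^e (hence is a cycle of length p^e). -/
/-!
`t ∘ a^j` is the affine map `f x = u * x + 1` with `u = (p + 1)^j ≡ 1 (mod p)`, so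
`f^n x = u^n x + (1 + u + ⋯ + u^(n-1))` and `f^n = 1` exactly when `p^e` divides the geometric
sum. By lifting the exponent, `p` divides `∑_{i<n} u^i` to the same power as it divides `n`.
-/

open Finset

namespace Equiv.Perm

variable {R : Type*} [CommRing R] {f : Perm R} {u : R}

theorem pow_apply_of_linear (hf : ∀ x, f x = u * x) (n : ℕ) (x : R) :
    (f ^ n) x = u ^ n * x := by
  induction n with
  | zero => simp
  | succ n ih => rw [pow_succ', mul_apply, ih, hf, pow_succ']; ring

theorem pow_apply_of_affine (hf : ∀ x, f x = u * x + 1) (n : ℕ) (x : R) :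
    (f ^ n) x = u ^ n * x + ∑ i ∈ range n, u ^ i := by
  induction n with
  | zero => simp
  | succ n ih => rw [pow_succ', mul_apply, ih, hf, geom_sum_succ]; ring

theorem pow_eq_one_iff_of_affine (hf : ∀ x, f x = u * x + 1) (n : ℕ) :
    f ^ n = 1 ↔ ∑ i ∈ range n, u ^ i = 0 := by
  refine ⟨fun h => by simpa [h] using (pow_apply_of_affine hf n 0).symm, fun h => ?_⟩
  have hu : u ^ n = 1 := by rw [← sub_eq_zero, ← geom_sum_mul, h, zero_mul]
  ext x
  simp [pow_apply_of_affine hf, hu, h]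

end Equiv.Perm

theorem Int.emultiplicity_geom_sum {p : ℕ} (hp : p.Prime) (hodd : Odd p) {U : ℤ}
    (hU : (p : ℤ) ∣ U - 1) (n : ℕ) :
    emultiplicity (p : ℤ) (∑ i ∈ Finset.range n, U ^ i) = emultiplicity p n := by
  rcases eq_or_ne U 1 with rfl | hU1
  · simp [Int.natCast_emultiplicity]
  have hp' : Prime (p : ℤ) := Nat.prime_iff_prime_int.mp hp
  have hpU : ¬ (p : ℤ) ∣ U := fun h => hp'.not_dvd_one (by simpa using dvd_sub h hU)
  have hfin : emultiplicity (p : ℤ) (U - 1) ≠ ⊤ :=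
    finiteMultiplicity_iff_emultiplicity_ne_top.mp <|
      Int.finiteMultiplicity_iff.mpr ⟨by exact_mod_cast hp.ne_one, sub_ne_zero.mpr hU1⟩
  have hLTE := Int.emultiplicity_pow_sub_pow hp hodd (by simpa using hU) hpU n
  rw [one_pow, ← geom_sum_mul, emultiplicity_mul hp', add_comm (emultiplicity _ (U - 1))] at hLTE
  exact WithTop.add_right_cancel hfin hLTE

theorem Int.pow_dvd_geom_sum_iff {p : ℕ} (hp : p.Prime) (hodd : Odd p) {U : ℤ}
    (hU : (p : ℤ) ∣ U - 1) (e n : ℕ) :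
    (p : ℤ) ^ e ∣ ∑ i ∈ Finset.range n, U ^ i ↔ p ^ e ∣ n := by
  rw [pow_dvd_iff_le_emultiplicity, pow_dvd_iff_le_emultiplicity,
    Int.emultiplicity_geom_sum hp hodd hU]

theorem stmt_7_general (p e : ℕ) (hp : p.Prime) (hodd : Odd p)
    (a : Equiv.Perm (ZMod (p ^ e))) (ha : ∀ x : ZMod (p ^ e), a x = (p + 1) * x)
    (j : ℕ) :
    orderOf (Equiv.addLeft (1 : ZMod (p ^ e)) * a ^ j) = p ^ e := by
  set U : ℤ := (p + 1) ^ j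
  have hU : (p : ℤ) ∣ U - 1 := by simpa using sub_dvd_pow_sub_pow ((p : ℤ) + 1) 1 j
  have hf : ∀ x, (Equiv.addLeft 1 * a ^ j : Equiv.Perm (ZMod (p ^ e))) x = U * x + 1 := by
    intro x
    rw [Equiv.Perm.mul_apply, Equiv.Perm.pow_apply_of_linear ha, Equiv.coe_addLeft]
    push_cast [U]
    ring
  refine Nat.dvd_right_iff_eq.mp fun n => ?_
  simp only [orderOf_dvd_iff_pow_eq_one, Equiv.Perm.pow_eq_one_iff_of_affine hf, ← Int.cast_pow,
    ← Int.cast_sum, ZMod.intCast_zmod_eq_zero_iff_dvd, Nat.cast_pow]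
  exact Int.pow_dvd_geom_sum_iff hp hodd hU e n

/-- For an odd prime `p`, `e ≥ 1`, the permutation `t ∘ a^j` of `ℤ/p^eℤ`, where
`t x = x + 1` and `a x = (p+1) * x`, has order `p^e` for any `0 ≤ j < p^(e-1)`. -/
theorem stmt_7 (p e : ℕ) (hp : p.Prime) (hodd : Odd p) (he : 1 ≤ e)
    (a : Equiv.Perm (ZMod (p ^ e))) (ha : ∀ x : ZMod (p ^ e), a x = (p + 1) * x)
    (j : ℕ) (hj : j < p ^ (e - 1)) :
    orderOf (Equiv.addLeft (1 : ZMod (p ^ e)) * a ^ j) = p ^ e :=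
  stmt_7_general p e hp hodd a ha j
end

section
/- Let p be an odd prime, e ≥ 1, and define b_j ∈ Sym(ℤ/p^eℤ) by b_j(x) = Σ_{i=0}^{x-1} (p+1)^(ij) (mod p^e). Then b_j is a bijection of ℤ/p^eℤ fixing 0, and conjugation satisfies b_j ∘ t ∘ b_j⁻¹ = t ∘ a^j, where t(x) = x+1 and a(x) = (p+1)x. -/
/-!
Write `c = (p+1)^j`. Since `p ∣ c - 1`, lifting the exponent applied to
`c^m - 1 = (Σ_{i<m} c^i) (c - 1)` gives `v_p (Σ_{i<m} c^i) = v_p m`, so the partial geometric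
sums vanish modulo `p^e` exactly at the multiples of `p^e`. Therefore `m ↦ Σ_{i<m} c^i` is
`p^e`-periodic, which turns the recursion `Σ_{i<m+1} c^i = 1 + c Σ_{i<m} c^i` into
`b (1 + x) = 1 + c b x` on `ℤ/p^eℤ`, and it is injective on `{0, …, p^e - 1}` because
`Σ_{i<y} c^i - Σ_{i<x} c^i = c^x Σ_{i<y-x} c^i` with `c` a unit.
-/

open Finset

theorem Int.emultiplicity_geom_sum_of_dvd_sub_one {p : ℕ} (hp : p.Prime) (hodd : Odd p) {c : ℤ}
    (hc : (p : ℤ) ∣ c - 1) (n : ℕ) :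
    emultiplicity (p : ℤ) (∑ i ∈ Finset.range n, c ^ i) = emultiplicity (p : ℤ) n := by
  rcases eq_or_ne c 1 with rfl | hc1
  · simp
  have hpc : ¬ (p : ℤ) ∣ c := fun h ↦
    hp.not_dvd_one (Int.natCast_dvd_natCast.mp (by simpa using (dvd_sub_right h).mp hc))
  have hlte := Int.emultiplicity_pow_sub_pow hp hodd hc hpc n
  have hfin : emultiplicity (p : ℤ) (c - 1) ≠ ⊤ :=
    finiteMultiplicity_iff_emultiplicity_ne_top.mp <| Int.finiteMultiplicity_iff.mpr
      ⟨by simpa using hp.ne_one, sub_ne_zero.mpr hc1⟩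
  rw [one_pow, ← geom_sum_mul, emultiplicity_mul (Nat.prime_iff_prime_int.mp hp), add_comm,
    ← Int.natCast_emultiplicity] at hlte
  exact WithTop.add_left_cancel hfin hlte

theorem Int.pow_dvd_geom_sum_iff_of_dvd_sub_one {p : ℕ} (hp : p.Prime) (hodd : Odd p) {c : ℤ}
    (hc : (p : ℤ) ∣ c - 1) (k n : ℕ) :
    (p : ℤ) ^ k ∣ ∑ i ∈ Finset.range n, c ^ i ↔ (p : ℤ) ^ k ∣ n := by
  rw [pow_dvd_iff_le_emultiplicity, pow_dvd_iff_le_emultiplicity,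
    Int.emultiplicity_geom_sum_of_dvd_sub_one hp hodd hc]

theorem ZMod.geom_sum_pow_add_one_eq_zero_iff {p : ℕ} (hp : p.Prime) (hodd : Odd p) (e j m : ℕ) :
    ∑ i ∈ range m, (((p : ZMod (p ^ e)) + 1) ^ j) ^ i = 0 ↔ (m : ZMod (p ^ e)) = 0 := by
  have hdvd : (p : ℤ) ∣ ((p : ℤ) + 1) ^ j - 1 := by
    simpa using sub_one_dvd_pow_sub_one ((p : ℤ) + 1) j
  have hcast := ZMod.intCast_zmod_eq_zero_iff_dvd (∑ i ∈ range m, (((p : ℤ) + 1) ^ j) ^ i) (p ^ e)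
  push_cast at hcast
  rw [hcast, natCast_eq_zero_iff, ← Int.natCast_dvd_natCast, Nat.cast_pow,
    Int.pow_dvd_geom_sum_iff_of_dvd_sub_one hp hodd hdvd]

theorem geom_sum_range_add {R : Type*} [Semiring R] (c : R) (a b : ℕ) :
    ∑ i ∈ range (a + b), c ^ i = ∑ i ∈ range a, c ^ i + c ^ a * ∑ i ∈ range b, c ^ i := by
  simp only [sum_range_add, mul_sum, pow_add]

theorem isUnit_of_geom_sum_eq_zero {R : Type*} [CommRing R] {c : R} {n : ℕ} (hn : n ≠ 0)
    (h : ∑ i ∈ range n, c ^ i = 0) : IsUnit c :=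
  IsUnit.of_pow_eq_one (sub_eq_zero.mp <| by rw [← geom_sum_mul, h, zero_mul]) hn

namespace ZMod

variable {n : ℕ}

def geomSum (c x : ZMod n) : ZMod n := ∑ i ∈ range x.val, c ^ i

theorem geomSum_zero (c : ZMod n) : geomSum c 0 = 0 := by
  simp [geomSum]

variable {c : ZMod n} (hc : ∀ m : ℕ, ∑ i ∈ range m, c ^ i = 0 ↔ (m : ZMod n) = 0)
include hc

theorem geomSum_natCast (m : ℕ) : geomSum c m = ∑ i ∈ range m, c ^ i := by
  have hper : Function.Periodic (fun m : ℕ ↦ ∑ i ∈ range m, c ^ i) n := fun m ↦ by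
    simp only [geom_sum_range_add, (hc n).mpr (natCast_self n), mul_zero, add_zero]
  rw [geomSum, val_natCast]
  exact hper.map_mod_nat m

theorem geomSum_one_add [NeZero n] (x : ZMod n) : geomSum c (1 + x) = 1 + c * geomSum c x := by
  have hx : 1 + x = ((x.val + 1 : ℕ) : ZMod n) := by push_cast [natCast_zmod_val]; ring
  rw [hx, geomSum_natCast hc, geom_sum_succ, geomSum]
  ring

theorem geomSum_injective [NeZero n] : Function.Injective (geomSum c) := by
  have hunit : IsUnit c := isUnit_of_geom_sum_eq_zero (NeZero.ne n) ((hc n).mpr (natCast_self n))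
  suffices key : ∀ x y : ZMod n, x.val ≤ y.val → geomSum c x = geomSum c y → x = y from
    fun x y h ↦ (le_total x.val y.val).elim (key x y · h) fun hle ↦ (key y x hle h.symm).symm
  intro x y hle h
  obtain ⟨d, hd⟩ := Nat.exists_eq_add_of_le hle
  rw [geomSum, geomSum, hd, geom_sum_range_add, left_eq_add, (hunit.pow _).mul_right_eq_zero, hc,
    natCast_eq_zero_iff] at h
  have hd0 : d = 0 := Nat.eq_zero_of_dvd_of_lt h (by have := y.val_lt; omega)
  exact val_injective n (by omega)

end ZMod

theorem Equiv.Perm.pow_apply_of_forall_eq_mul {M : Type*} [Monoid M] {a : Equiv.Perm M} {u : M}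
    (ha : ∀ w, a w = u * w) (j : ℕ) (w : M) : (a ^ j) w = u ^ j * w := by
  induction j with
  | zero => simp
  | succ j ih => rw [pow_succ', Equiv.Perm.mul_apply, ih, ha, pow_succ', mul_assoc]

theorem stmt_9_general (p e : ℕ) (hp : p.Prime) (hodd : Odd p)
    (a : Equiv.Perm (ZMod (p ^ e))) (ha : ∀ w : ZMod (p ^ e), a w = (p + 1) * w)
    (j : ℕ) :
    ∃ b : Equiv.Perm (ZMod (p ^ e)),
      (∀ x : ZMod (p ^ e),
        b x = ∑ i ∈ Finset.range x.val, ((p : ZMod (p ^ e)) + 1) ^ (i * j)) ∧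
      b 0 = 0 ∧
      b * Equiv.addLeft (1 : ZMod (p ^ e)) * b⁻¹ =
        Equiv.addLeft (1 : ZMod (p ^ e)) * a ^ j := by
  have : NeZero (p ^ e) := ⟨pow_ne_zero e hp.ne_zero⟩
  have hc := ZMod.geom_sum_pow_add_one_eq_zero_iff hp hodd e j
  let b := Equiv.ofBijective _ (Finite.injective_iff_bijective.mp (ZMod.geomSum_injective hc))
  refine ⟨b, fun x ↦ ?_, ZMod.geomSum_zero _, ?_⟩
  · simp only [b, Equiv.ofBijective_apply, ZMod.geomSum, ← pow_mul, mul_comm j]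
  · rw [mul_inv_eq_iff_eq_mul]
    ext x
    simp only [b, Equiv.Perm.mul_apply, Equiv.coe_addLeft, Equiv.ofBijective_apply,
      ZMod.geomSum_one_add hc, Equiv.Perm.pow_apply_of_forall_eq_mul ha]

/-- The map `b_j x = Σ_{i < x} (p+1)^(i·j)` on `ℤ/p^eℤ` is a bijection fixing `0`
which conjugates the translation `t : x ↦ x + 1` to `t ∘ a^j`, where
`a x = (p+1) * x`. -/
theorem stmt_9 (p e : ℕ) (hp : p.Prime) (hodd : Odd p) (he : 1 ≤ e)
    (a : Equiv.Perm (ZMod (p ^ e))) (ha : ∀ w : ZMod (p ^ e), a w = (p + 1) * w)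
    (j : ℕ) :
    ∃ b : Equiv.Perm (ZMod (p ^ e)),
      (∀ x : ZMod (p ^ e),
        b x = ∑ i ∈ Finset.range x.val, ((p : ZMod (p ^ e)) + 1) ^ (i * j)) ∧
      b 0 = 0 ∧
      b * Equiv.addLeft (1 : ZMod (p ^ e)) * b⁻¹ =
        Equiv.addLeft (1 : ZMod (p ^ e)) * a ^ j :=
  stmt_9_general p e hp hodd a ha j
end

section
/- Let p be an odd prime and e ≥ 1. If s is a skew-morphism of ℤ/p^eℤ of order p^i (with 0 ≤ i ≤ e-1), then gcd(s(1) - 1, p^e) = p^(e-i), where s(1) - 1 is taken as an integer representative in {0, …, p^e - 1} (with the convention gcd(0, p^e) = p^e). -/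
open Equiv Function

namespace ZMod

theorem natCast_dvd_natCast_iff_of_dvd {d m : ℕ} [NeZero m] (hdm : d ∣ m) (a : ℕ) :
    (d : ZMod m) ∣ (a : ZMod m) ↔ d ∣ a := by
  refine ⟨fun ⟨c, hc⟩ => ?_, Nat.cast_dvd_cast⟩
  rw [← natCast_zmod_val c, ← Nat.cast_mul, natCast_eq_natCast_iff] at hc
  exact (hc.dvd_iff hdm).mpr (dvd_mul_right _ _)

theorem natCast_dvd_castHom_iff {d m n : ℕ} [NeZero m] [NeZero n] (hdm : d ∣ m) (hmn : m ∣ n)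
    (y : ZMod n) : (d : ZMod m) ∣ castHom hmn (ZMod m) y ↔ (d : ZMod n) ∣ y := by
  rw [← natCast_zmod_val y, map_natCast, natCast_dvd_natCast_iff_of_dvd hdm,
    natCast_dvd_natCast_iff_of_dvd (hdm.trans hmn)]

theorem castHom_eq_zero_iff {m n : ℕ} [NeZero m] [NeZero n] (hmn : m ∣ n) (y : ZMod n) :
    castHom hmn (ZMod m) y = 0 ↔ (m : ZMod n) ∣ y := by
  rw [← natCast_dvd_castHom_iff dvd_rfl hmn, natCast_self, zero_dvd_iff]

theorem natCast_pow_self (p n : ℕ) : (p : ZMod (p ^ n)) ^ n = 0 := by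
  rw [← Nat.cast_pow, natCast_self]

variable {p : ℕ} [Fact p.Prime] {m : ℕ}

theorem dvd_prime_pow_of_ne_zero {y : ZMod (p ^ (m + 1))} (hy : y ≠ 0) :
    y ∣ (p : ZMod (p ^ (m + 1))) ^ m := by
  have hp : p.Prime := Fact.out
  obtain ⟨j, u, hpu, hval⟩ := Nat.exists_eq_pow_mul_and_not_dvd ((val_ne_zero y).mpr hy) p hp.ne_one
  have hy' : y = (p : ZMod (p ^ (m + 1))) ^ j * u := by
    rw [← natCast_zmod_val y, hval, Nat.cast_mul, Nat.cast_pow]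
  have hj : j ≤ m := by
    by_contra! h
    refine hy ?_
    rw [hy', ← Nat.cast_pow, (natCast_eq_zero_iff _ _).mpr (pow_dvd_pow p h), zero_mul]
  rw [hy', ((isUnit_natCast_iff_not_dvd_pow hp m.succ_pos).mpr hpu).mul_right_dvd]
  exact pow_dvd_pow _ hj

theorem nsmul_eq_zero_iff_dvd {y : ZMod (p ^ (m + 1))} :
    p • y = 0 ↔ (p : ZMod (p ^ (m + 1))) ^ m ∣ y := by
  have hp : p.Prime := Fact.out
  rw [nsmul_eq_mul, ← natCast_zmod_val y, ← Nat.cast_mul, natCast_eq_zero_iff, ← Nat.cast_pow,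
    natCast_dvd_natCast_iff_of_dvd (pow_dvd_pow p m.le_succ), mul_comm]
  exact Nat.mul_dvd_mul_iff_right hp.pos

abbrev castPowSucc (p m : ℕ) : ZMod (p ^ (m + 1)) →+* ZMod (p ^ m) :=
  castHom (pow_dvd_pow p m.le_succ) _

theorem castPowSucc_eq_zero_iff {y : ZMod (p ^ (m + 1))} :
    castPowSucc p m y = 0 ↔ (p : ZMod (p ^ (m + 1))) ^ m ∣ y := by
  rw [castHom_eq_zero_iff, Nat.cast_pow]

theorem pow_dvd_castPowSucc_iff {j : ℕ} (hj : j ≤ m) {y : ZMod (p ^ (m + 1))} :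
    (p : ZMod (p ^ m)) ^ j ∣ castPowSucc p m y ↔ (p : ZMod (p ^ (m + 1))) ^ j ∣ y := by
  rw [← Nat.cast_pow, ← Nat.cast_pow, natCast_dvd_castHom_iff (pow_dvd_pow p hj)]

theorem addOrderOf_eq_prime_mul_addOrderOf_castPowSucc {y : ZMod (p ^ (m + 1))} (hy : y ≠ 0) :
    addOrderOf y = p * addOrderOf (castPowSucc p m y) := by
  have hp : p.Prime := Fact.out
  have hpy : p ∣ addOrderOf y := by
    have hdvd : addOrderOf y ∣ p ^ (m + 1) :=
      addOrderOf_dvd_of_nsmul_eq_zero (by rw [nsmul_eq_mul, natCast_self, zero_mul])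
    obtain ⟨j, -, hj⟩ := (Nat.dvd_prime_pow hp).mp hdvd
    rcases j with _ | j
    · exact absurd (AddMonoid.addOrderOf_eq_one_iff.mp (by simpa using hj)) hy
    · exact hj ▸ dvd_pow_self p j.succ_ne_zero
  have hcast : addOrderOf (castPowSucc p m y) = addOrderOf (p • y) :=
    addOrderOf_eq_addOrderOf_iff.mpr fun t => by
      rw [← map_nsmul, castPowSucc_eq_zero_iff, ← nsmul_eq_zero_iff_dvd, smul_comm]
  rw [hcast, addOrderOf_nsmul_of_dvd hp.ne_zero hpy, Nat.mul_div_cancel' hpy]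

end ZMod

theorem map_add_of_twisted_map_add {A M : Type*} [AddCommGroup A] [AddCommGroup M] {p : ℕ}
    [Fact p.Prime] {N : ℕ} (hA : ∀ a : A, p ^ N • a = 0) {D : A → M} (hDp : ∀ a, p • D a = 0)
    (hD0 : D 0 = 0) {c : A → ℕ} (hD : ∀ a b, D (a + b) = D a + c a • D b) (a b : A) :
    D (a + b) = D a + D b := by
  rcases eq_or_ne (D b) 0 with hb | hb
  · rw [hD, hb, smul_zero]
  have hsmul : ∀ t t' : ℕ, t • D b = t' • D b ↔ (t : ZMod p) = t' := fun t t' => by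
    rw [nsmul_eq_nsmul_iff_modEq, addOrderOf_eq_prime (hDp b) hb, ZMod.natCast_eq_natCast_iff]
  -- `a ↦ c a mod p` is a homomorphism from a `p`-group to the multiplicative monoid of `ZMod p`,
  -- hence trivial.
  have hc0 : (c 0 : ZMod p) = 1 := by
    rw [← Nat.cast_one, ← hsmul, one_nsmul]
    simpa [hD0, eq_comm] using hD 0 b
  have hmul : ∀ a a', (c (a + a') : ZMod p) = c a * c a' := fun a a' => by
    rw [← Nat.cast_mul, ← hsmul]
    have h1 : D (a + a' + b) = D a + c a • D a' + c (a + a') • D b := by rw [hD, hD]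
    have h2 : D (a + a' + b) = D a + c a • D a' + (c a * c a') • D b := by
      rw [add_assoc, hD, hD, smul_add, mul_smul, add_assoc]
    exact add_left_cancel (h1.symm.trans h2)
  have hpow : ∀ t : ℕ, (c (t • a) : ZMod p) = (c a : ZMod p) ^ t := by
    intro t
    induction t with
    | zero => rw [zero_nsmul, hc0, pow_zero]
    | succ t ih => rw [succ_nsmul, hmul, ih, pow_succ]
  have hca : (c a : ZMod p) = 1 :=
    calc (c a : ZMod p) = (c a : ZMod p) ^ p ^ N := (ZMod.pow_card_pow _).symm
      _ = 1 := by rw [← hpow, hA, hc0]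
  rw [hD, (hsmul (c a) 1).mpr (by rw [hca, Nat.cast_one]), one_nsmul]

namespace Equiv.Perm

variable {α β : Type*} [Finite β] {ρ : α → β} (hρ : Surjective ρ) (f : Perm α)
  (hf : ∀ x y, ρ x = ρ y → ρ (f x) = ρ (f y))

noncomputable def descend : Perm β :=
  have hcomm : (fun b => ρ (f (surjInv hρ b))) ∘ ρ = ρ ∘ f :=
    funext fun x => hf _ _ (surjInv_eq hρ (ρ x))
  Equiv.ofBijective _ <| Finite.injective_iff_bijective.mp <| Finite.injective_iff_surjective.mpr <|
    Surjective.of_comp (hcomm ▸ hρ.comp f.surjective)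

theorem descend_apply (x : α) : descend hρ f hf (ρ x) = ρ (f x) :=
  hf _ _ (surjInv_eq hρ (ρ x))

theorem descend_pow_apply (k : ℕ) (x : α) : (descend hρ f hf ^ k) (ρ x) = ρ ((f ^ k) x) := by
  have : Semiconj ρ f (descend hρ f hf) := fun x => (descend_apply hρ f hf x).symm
  rw [coe_pow, coe_pow]
  exact ((this.iterate_right k) x).symm

theorem pow_apply_eq_add_nsmul {G : Type*} [AddCommGroup G] {g : Perm G} {x : G}
    (hg : ∀ y, g (y + (g x - x)) = g y + (g x - x)) (j : ℕ) : (g ^ j) x = x + j • (g x - x) := by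
  rw [coe_pow, Function.Commute.iterate_eq_of_map_eq hg j (add_sub_cancel x (g x)).symm,
    add_right_iterate_apply]

end Equiv.Perm

namespace IsSkewMorphism

variable {n : ℕ} {f : Perm (ZMod n)}

theorem exists_nat_power [NeZero n] (hf : IsSkewMorphism f) :
    ∃ π : ZMod n → ℕ, ∀ x y, f (x + y) = f x + (f ^ π x) y := by
  obtain ⟨-, π, hπ⟩ := hf
  choose π' hπ' using fun x =>
    (isOfFinOrder_of_finite f).mem_powers_iff_mem_zpowers.mpr ⟨π x, rfl⟩
  exact ⟨π', fun x y => by rw [hπ, ← show f ^ π' x = f ^ π x from hπ' x]⟩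

theorem exists_pow_apply_add [NeZero n] (hf : IsSkewMorphism f) (k : ℕ) (x : ZMod n) :
    ∃ q : ℕ, ∀ y, (f ^ k) (x + y) = (f ^ k) x + (f ^ q) y := by
  obtain ⟨π, hπ⟩ := hf.exists_nat_power
  induction k with
  | zero => exact ⟨0, fun y => rfl⟩
  | succ k ih =>
    obtain ⟨q, hq⟩ := ih
    refine ⟨π ((f ^ k) x) + q, fun y => ?_⟩
    rw [pow_succ', Perm.mul_apply, Perm.mul_apply, hq, hπ, pow_add, Perm.mul_apply]

theorem apply_add_of_apply_eq (hf : IsSkewMorphism f) {h : ZMod n} (hh : f h = h) (x : ZMod n) :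
    f (x + h) = f x + h := by
  obtain ⟨-, π, hπ⟩ := hf
  rw [hπ, Perm.zpow_apply_eq_self_of_apply_eq_self hh]

theorem pow_apply_eq_add_nsmul (hf : IsSkewMorphism f) {z : ZMod n} (hz : f (f z - z) = f z - z)
    (t : ℕ) : (f ^ t) z = z + t • (f z - z) :=
  Perm.pow_apply_eq_add_nsmul (hf.apply_add_of_apply_eq hz) t

def fixedAddSubgroup (hf : IsSkewMorphism f) : AddSubgroup (ZMod n) where
  carrier := fixedPoints f
  zero_mem' := hf.1
  add_mem' {a b} ha hb := (hf.apply_add_of_apply_eq hb a).trans (congrArg (· + b) ha)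
  neg_mem' {a} ha := by
    have h := hf.apply_add_of_apply_eq ha (-a)
    rw [neg_add_cancel, hf.1] at h
    exact eq_neg_of_add_eq_zero_left h.symm

theorem mem_fixedAddSubgroup (hf : IsSkewMorphism f) {x : ZMod n} :
    x ∈ hf.fixedAddSubgroup ↔ f x = x := Iff.rfl

theorem eq_one_of_apply_one (hf : IsSkewMorphism f) (h1 : f 1 = 1) : f = 1 := by
  ext x
  rw [← ZMod.intCast_zmod_cast x, ← zsmul_one]
  exact zsmul_mem (hf.mem_fixedAddSubgroup.mpr h1) _

section PrimePower

variable {p : ℕ} [Fact p.Prime] {m k : ℕ} {f : Perm (ZMod (p ^ (m + 1)))}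

theorem apply_eq_self_of_dvd (hf : IsSkewMorphism f) (hfp : f ^ p ^ k = 1)
    {h : ZMod (p ^ (m + 1))} (hh : (p : ZMod (p ^ (m + 1))) ^ m ∣ h) : f h = h := by
  have hpG : IsPGroup p (Subgroup.zpowers f) :=
    IsPGroup.of_card_dvd_pow (n := k) ((Nat.card_zpowers f).symm ▸ orderOf_dvd_of_pow_eq_one hfp)
  have h0 : (0 : ZMod (p ^ (m + 1))) ∈ MulAction.fixedPoints (Subgroup.zpowers f) _ := fun g => by
    obtain ⟨z, hz⟩ := Subgroup.mem_zpowers_iff.mp g.2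
    change (g : Perm (ZMod (p ^ (m + 1)))) 0 = 0
    rw [← hz, Perm.zpow_apply_eq_self_of_apply_eq_self hf.1]
  obtain ⟨b, hb, hb0⟩ := hpG.exists_fixed_point_of_prime_dvd_card_of_fixed_point _
    (by rw [Nat.card_zmod]; exact dvd_pow_self p m.succ_ne_zero) h0
  have hbH : b ∈ hf.fixedAddSubgroup := hb ⟨f, Subgroup.mem_zpowers f⟩
  obtain ⟨c, rfl⟩ := (ZMod.dvd_prime_pow_of_ne_zero (Ne.symm hb0)).trans hh
  rw [← hf.mem_fixedAddSubgroup, ← ZMod.natCast_zmod_val c, mul_comm, ← nsmul_eq_mul]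
  exact nsmul_mem hbH _

theorem apply_add_of_dvd (hf : IsSkewMorphism f) (hfp : f ^ p ^ k = 1)
    {h : ZMod (p ^ (m + 1))} (hh : (p : ZMod (p ^ (m + 1))) ^ m ∣ h) (x : ZMod (p ^ (m + 1))) :
    f (x + h) = f x + h :=
  hf.apply_add_of_apply_eq (hf.apply_eq_self_of_dvd hfp hh) x

theorem castPowSucc_apply_congr (hf : IsSkewMorphism f) (hfp : f ^ p ^ k = 1)
    {x y : ZMod (p ^ (m + 1))} (hxy : ZMod.castPowSucc p m x = ZMod.castPowSucc p m y) :
    ZMod.castPowSucc p m (f x) = ZMod.castPowSucc p m (f y) := by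
  have h : (p : ZMod (p ^ (m + 1))) ^ m ∣ y - x :=
    ZMod.castPowSucc_eq_zero_iff.mp (by rw [map_sub, hxy, sub_self])
  rw [← add_sub_cancel x y, hf.apply_add_of_dvd hfp h, map_add,
    ZMod.castPowSucc_eq_zero_iff.mpr h, add_zero]

noncomputable def reduce (hf : IsSkewMorphism f) (hfp : f ^ p ^ k = 1) : Perm (ZMod (p ^ m)) :=
  Perm.descend (ZMod.ringHom_surjective (ZMod.castPowSucc p m)) f
    fun _ _ => hf.castPowSucc_apply_congr hfp

theorem reduce_apply (hf : IsSkewMorphism f) (hfp : f ^ p ^ k = 1) (x : ZMod (p ^ (m + 1))) :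
    hf.reduce hfp (ZMod.castPowSucc p m x) = ZMod.castPowSucc p m (f x) :=
  Perm.descend_apply _ _ _ x

theorem reduce_pow_apply (hf : IsSkewMorphism f) (hfp : f ^ p ^ k = 1) (j : ℕ)
    (x : ZMod (p ^ (m + 1))) :
    (hf.reduce hfp ^ j) (ZMod.castPowSucc p m x) = ZMod.castPowSucc p m ((f ^ j) x) :=
  Perm.descend_pow_apply _ _ _ j x

theorem reduce_pow_eq_one (hf : IsSkewMorphism f) (hfp : f ^ p ^ k = 1) :
    hf.reduce hfp ^ p ^ k = 1 := by
  ext a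
  obtain ⟨x, rfl⟩ := ZMod.ringHom_surjective (ZMod.castPowSucc p m) a
  rw [reduce_pow_apply, hfp, Perm.one_apply, Perm.one_apply]

theorem isSkewMorphism_reduce (hf : IsSkewMorphism f) (hfp : f ^ p ^ k = 1) :
    IsSkewMorphism (hf.reduce hfp) := by
  obtain ⟨π, hπ⟩ := hf.exists_nat_power
  have hρ := ZMod.ringHom_surjective (ZMod.castPowSucc p m)
  refine ⟨?_, fun a => π (surjInv hρ a), fun a b => ?_⟩
  · rw [← map_zero (ZMod.castPowSucc p m), reduce_apply, hf.1]
  · obtain ⟨y, rfl⟩ := hρ b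
    conv_lhs => rw [← surjInv_eq hρ a]
    rw [zpow_natCast, ← map_add, reduce_apply, hπ, map_add, reduce_pow_apply, ← reduce_apply hf hfp,
      surjInv_eq hρ a]

section Layers

variable {f : Perm (ZMod (p ^ (m + 2)))}

theorem map_add_sub_of_layers (hf : IsSkewMorphism f)
    (hV : ∀ v, (p : ZMod (p ^ (m + 2))) ^ (m + 1) ∣ v → f v = v)
    (hW : ∀ z, (p : ZMod (p ^ (m + 2))) ^ m ∣ z → (p : ZMod (p ^ (m + 2))) ^ (m + 1) ∣ f z - z)
    {z z' : ZMod (p ^ (m + 2))} (hz : (p : ZMod (p ^ (m + 2))) ^ m ∣ z)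
    (hz' : (p : ZMod (p ^ (m + 2))) ^ m ∣ z') :
    f (z + z') - (z + z') = (f z - z) + (f z' - z') := by
  obtain ⟨π, hπ⟩ := hf.exists_nat_power
  refine map_add_of_twisted_map_add (p := p) (A := Ideal.span {(p : ZMod (p ^ (m + 2))) ^ m})
    (N := 2) (D := fun a => f a - a) (c := fun a => π a) (fun a => ?_) (fun a => ?_) ?_
    (fun a b => ?_) ⟨z, Ideal.mem_span_singleton.mpr hz⟩ ⟨z', Ideal.mem_span_singleton.mpr hz'⟩
  · obtain ⟨c, hc⟩ := Ideal.mem_span_singleton.mp a.2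
    ext1
    rw [Submodule.coe_smul_of_tower, hc, nsmul_eq_mul, ← mul_assoc, Nat.cast_pow, ← pow_add,
      add_comm 2 m, ZMod.natCast_pow_self, zero_mul, Submodule.coe_zero]
  · exact ZMod.nsmul_eq_zero_iff_dvd.mpr (hW a (Ideal.mem_span_singleton.mp a.2))
  · simp [hf.1]
  · simp only [Submodule.coe_add]
    rw [hπ, hf.pow_apply_eq_add_nsmul (hV _ (hW b (Ideal.mem_span_singleton.mp b.2)))]
    abel

theorem pow_pow_apply_of_layers (hf : IsSkewMorphism f)
    (hV : ∀ v, (p : ZMod (p ^ (m + 2))) ^ (m + 1) ∣ v → f v = v)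
    (hW : ∀ z, (p : ZMod (p ^ (m + 2))) ^ m ∣ z → (p : ZMod (p ^ (m + 2))) ^ (m + 1) ∣ f z - z)
    {K Q : ℕ} {x d : ZMod (p ^ (m + 2))} (hd : (f ^ K) x = x + d)
    (hdW : (p : ZMod (p ^ (m + 2))) ^ m ∣ d) (hQ : ∀ y, (f ^ K) (x + y) = (f ^ K) x + (f ^ Q) y)
    (j : ℕ) : ((f ^ K) ^ j) x = x + j • d + (Q * j.choose 2) • (f d - d) := by
  have hDd := hW d hdW
  have hDj : ∀ j : ℕ, f (j • d) - j • d = j • (f d - d) := by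
    intro j
    induction j with
    | zero => simp [hf.1]
    | succ j ih =>
      rw [succ_nsmul, map_add_sub_of_layers hf hV hW (dvd_nsmul_of_dvd j hdW) hdW, ih, succ_nsmul]
  induction j with
  | zero => simp
  | succ j ih =>
    have he : (p : ZMod (p ^ (m + 2))) ^ (m + 1) ∣ (Q * j.choose 2) • (f d - d) :=
      dvd_nsmul_of_dvd _ hDd
    have hjd : (p : ZMod (p ^ (m + 2))) ^ m ∣ j • d + (Q * j.choose 2) • (f d - d) :=
      dvd_add (dvd_nsmul_of_dvd j hdW) ((pow_dvd_pow _ m.le_succ).trans he)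
    rw [pow_succ' (f ^ K) j, Perm.mul_apply, ih, add_assoc, hQ, hd,
      hf.pow_apply_eq_add_nsmul (hV _ (hW _ hjd)), hf.apply_add_of_apply_eq (hV _ he),
      add_sub_add_right_eq_sub, hDj, Nat.choose_succ_succ', Nat.choose_one_right]
    module

theorem dvd_pow_apply_sub_of_layers (hodd : Odd p) (hf : IsSkewMorphism f)
    (hV : ∀ v, (p : ZMod (p ^ (m + 2))) ^ (m + 1) ∣ v → f v = v)
    (hW : ∀ z, (p : ZMod (p ^ (m + 2))) ^ m ∣ z → (p : ZMod (p ^ (m + 2))) ^ (m + 1) ∣ f z - z)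
    {K : ℕ} (hK : f ^ (K * p) = 1) {x : ZMod (p ^ (m + 2))}
    (hx : (p : ZMod (p ^ (m + 2))) ^ m ∣ (f ^ K) x - x) :
    (p : ZMod (p ^ (m + 2))) ^ (m + 1) ∣ (f ^ K) x - x := by
  have hp : p.Prime := Fact.out
  obtain ⟨Q, hQ⟩ := hf.exists_pow_apply_add K x
  have horbit := pow_pow_apply_of_layers hf hV hW (add_sub_cancel x _).symm hx hQ p
  have hp2 : 2 < p := lt_of_le_of_ne hp.two_le (by rintro rfl; exact absurd hodd (by decide))
  obtain ⟨t, ht⟩ := hp.dvd_choose_self two_ne_zero hp2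
  rw [← pow_mul, hK, Perm.one_apply, ht, mul_comm p t, ← mul_assoc, mul_smul,
    ZMod.nsmul_eq_zero_iff_dvd.mpr (hW _ hx), smul_zero, add_zero, left_eq_add] at horbit
  exact ZMod.nsmul_eq_zero_iff_dvd.mp horbit

end Layers

theorem dvd_pow_prime_pow_apply_sub (hodd : Odd p) {i : ℕ} :
    ∀ {m : ℕ} {f : Perm (ZMod (p ^ (m + 1)))}, IsSkewMorphism f → f ^ p ^ (i + 1) = 1 →
      ∀ x, (p : ZMod (p ^ (m + 1))) ^ m ∣ (f ^ p ^ i) x - x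
  | 0, _, _, _, _ => by simp
  | m + 1, f, hf, hfp, x => by
    have hf' := hf.isSkewMorphism_reduce hfp
    have hfp' := hf.reduce_pow_eq_one hfp
    have hx : (p : ZMod (p ^ (m + 2))) ^ m ∣ (f ^ p ^ i) x - x := by
      rw [← ZMod.pow_dvd_castPowSucc_iff m.le_succ, map_sub, ← hf.reduce_pow_apply hfp]
      exact dvd_pow_prime_pow_apply_sub hodd hf' hfp' _
    refine dvd_pow_apply_sub_of_layers hodd hf (fun v hv => hf.apply_eq_self_of_dvd hfp hv)
      (fun z hz => ?_) (by rw [← pow_succ, hfp]) hx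
    rw [← ZMod.castPowSucc_eq_zero_iff, map_sub, ← hf.reduce_apply hfp, sub_eq_zero]
    exact hf'.apply_eq_self_of_dvd hfp' ((ZMod.pow_dvd_castPowSucc_iff m.le_succ).mpr hz)

theorem pow_mul_prime_eq_one (hf : IsSkewMorphism f) (hfp : f ^ p ^ k = 1) {t : ℕ}
    (ht : hf.reduce hfp ^ t = 1) : f ^ (t * p) = 1 := by
  ext x
  have hh : (p : ZMod (p ^ (m + 1))) ^ m ∣ (f ^ t) x - x := by
    rw [← ZMod.castPowSucc_eq_zero_iff, map_sub, ← hf.reduce_pow_apply hfp, ht, Perm.one_apply,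
      sub_self]
  have hcomm : ∀ y, (f ^ t) (y + ((f ^ t) x - x)) = (f ^ t) y + ((f ^ t) x - x) := by
    rw [Perm.coe_pow]
    exact Function.Commute.iterate_left (g := (· + _)) (hf.apply_add_of_dvd hfp hh) t
  rw [pow_mul, Perm.pow_apply_eq_add_nsmul hcomm p, ZMod.nsmul_eq_zero_iff_dvd.mpr hh, add_zero,
    Perm.one_apply]

theorem orderOf_eq_prime_mul_orderOf_reduce (hodd : Odd p) (hf : IsSkewMorphism f)
    (hfp : f ^ p ^ k = 1) (hf1 : f ≠ 1) : orderOf f = p * orderOf (hf.reduce hfp) := by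
  have hp : p.Prime := Fact.out
  obtain ⟨j, -, hj⟩ := (Nat.dvd_prime_pow hp).mp (orderOf_dvd_of_pow_eq_one hfp)
  obtain ⟨i, rfl⟩ : ∃ i, j = i + 1 := Nat.exists_eq_succ_of_ne_zero <| by
    rintro rfl
    exact hf1 (orderOf_eq_one_iff.mp (by rw [hj, pow_zero]))
  have hup : orderOf (hf.reduce hfp) ∣ p ^ i := orderOf_dvd_of_pow_eq_one <| by
    ext a
    obtain ⟨x, rfl⟩ := ZMod.ringHom_surjective (ZMod.castPowSucc p m) a
    rw [hf.reduce_pow_apply, Perm.one_apply, ← sub_eq_zero, ← map_sub,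
      ZMod.castPowSucc_eq_zero_iff]
    exact hf.dvd_pow_prime_pow_apply_sub hodd (hj ▸ pow_orderOf_eq_one f) x
  have hlow : orderOf f ∣ orderOf (hf.reduce hfp) * p :=
    orderOf_dvd_of_pow_eq_one (hf.pow_mul_prime_eq_one hfp (pow_orderOf_eq_one _))
  rw [hj] at hlow
  rw [hj, mul_comm]
  exact Nat.dvd_antisymm hlow (pow_succ p i ▸ Nat.mul_dvd_mul_right hup p)

theorem addOrderOf_apply_one_sub_one (hodd : Odd p) :
    ∀ {e : ℕ} {s : Perm (ZMod (p ^ e))}, IsSkewMorphism s → s ^ p ^ k = 1 →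
      addOrderOf (s 1 - 1) = orderOf s
  | 0, s, _, _ => by
    have : Subsingleton (ZMod (p ^ 0)) := by rw [pow_zero]; infer_instance
    rw [Subsingleton.elim s 1, Perm.one_apply, sub_self, addOrderOf_zero, orderOf_one]
  | m + 1, s, hs, hsp => by
    rcases eq_or_ne s 1 with rfl | hs1
    · rw [Perm.one_apply, sub_self, addOrderOf_zero, orderOf_one]
    have h1 : s 1 - 1 ≠ 0 := sub_ne_zero.mpr fun h => hs1 (hs.eq_one_of_apply_one h)
    have hred : ZMod.castPowSucc p m (s 1 - 1) = hs.reduce hsp 1 - 1 := by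
      rw [map_sub, map_one (ZMod.castPowSucc p m), ← hs.reduce_apply hsp,
        map_one (ZMod.castPowSucc p m)]
    rw [ZMod.addOrderOf_eq_prime_mul_addOrderOf_castPowSucc h1, hred,
      hs.orderOf_eq_prime_mul_orderOf_reduce hodd hsp hs1,
      addOrderOf_apply_one_sub_one hodd (hs.isSkewMorphism_reduce hsp) (hs.reduce_pow_eq_one hsp)]

end PrimePower

end IsSkewMorphism

theorem stmt_11_general (p e i : ℕ) (hp : p.Prime) (hodd : Odd p) (s : Equiv.Perm (ZMod (p ^ e)))
    (hs : IsSkewMorphism s) (hord : orderOf s = p ^ i) :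
    Nat.gcd (s 1 - 1 : ZMod (p ^ e)).val (p ^ e) = p ^ (e - i) := by
  have := Fact.mk hp
  have hadd : addOrderOf (s 1 - 1) = p ^ i :=
    (hs.addOrderOf_apply_one_sub_one hodd (hord ▸ pow_orderOf_eq_one s)).trans hord
  have hie : i ≤ e := (Nat.pow_dvd_pow_iff_le_right hp.one_lt).mp <| hadd ▸
    addOrderOf_dvd_of_nsmul_eq_zero (by rw [nsmul_eq_mul, ZMod.natCast_self, zero_mul])
  rw [← ZMod.natCast_zmod_val (s 1 - 1), ZMod.addOrderOf_coe _ (NeZero.ne _)] at hadd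
  rw [Nat.gcd_comm, ← Nat.div_div_self (Nat.gcd_dvd_left _ _) (NeZero.ne _), hadd,
    Nat.pow_div hie hp.pos]

/-- If `s` is a skew-morphism of `ℤ/p^eℤ` of order `p^i` (`0 ≤ i ≤ e-1`),
then `gcd(s(1) - 1, p^e) = p^(e-i)`, where `s(1) - 1` is represented by its
value in `{0, …, p^e - 1}`. -/
theorem stmt_11 (p e i : ℕ) (hp : p.Prime) (hodd : Odd p) (he : 1 ≤ e)
    (hi : i ≤ e - 1) (s : Equiv.Perm (ZMod (p ^ e)))
    (hs : IsSkewMorphism s) (hord : orderOf s = p ^ i) :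
    Nat.gcd (s 1 - 1 : ZMod (p ^ e)).val (p ^ e) = p ^ (e - i) :=
  stmt_11_general p e i hp hodd s hs hord
end

section
/- Let p be an odd prime and u a unit of ℤ/p^mℤ with u ≠ 1 whose multiplicative order d satisfies p ∤ d. Then p does not divide u - 1, and p^m divides 1 + u + u² + ⋯ + u^(d-1). -/
/-!
Reduction modulo `p` maps `(ZMod (p ^ m))ˣ` onto `(ZMod p)ˣ`, so its kernel has order
`φ (p ^ m) / φ p = p ^ (m - 1)`. If `p ∣ u - 1`, then `u` lies in this kernel and its order `d`
divides `p ^ (m - 1)`; as `d` is prime to `p`, this forces `u = 1`. Hence `u - 1` is a unit, and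
`(∑ i < d, u ^ i) * (u - 1) = u ^ d - 1 = 0` makes the sum vanish.
-/

open scoped Nat

theorem geom_sum_eq_zero_of_isUnit_sub_one {R : Type*} [CommRing R] {x : R} {d : ℕ}
    (hx : x ^ d = 1) (hx1 : IsUnit (x - 1)) : ∑ i ∈ Finset.range d, x ^ i = 0 :=
  hx1.mul_left_eq_zero.mp (by rw [geom_sum_mul, hx, sub_self])

namespace ZMod

variable {n p m : ℕ}

theorem natCast_dvd_iff_dvd_val [NeZero n] (h : p ∣ n) (x : ZMod n) :
    (p : ZMod n) ∣ x ↔ p ∣ x.val := by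
  constructor
  · rintro ⟨y, rfl⟩
    have hcast : castHom h (ZMod p) (p * y) = 0 := by
      rw [map_mul, map_natCast, natCast_self, zero_mul]
    rwa [castHom_apply, cast_eq_val, natCast_eq_zero_iff] at hcast
  · rintro ⟨c, hc⟩
    exact ⟨c, by rw [← natCast_zmod_val x, hc, Nat.cast_mul]⟩

theorem unitsMap_eq_one_iff_natCast_dvd_sub_one [NeZero n] (h : p ∣ n) (u : (ZMod n)ˣ) :
    unitsMap h u = 1 ↔ (p : ZMod n) ∣ (u : ZMod n) - 1 := by
  have hcast : castHom h (ZMod p) ((u : ZMod n) - 1) = ((u : ZMod n).val : ZMod p) - 1 := by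
    rw [map_sub, map_one, castHom_apply, cast_eq_val]
  rw [natCast_dvd_iff_dvd_val h, ← natCast_eq_zero_iff _ p, ← cast_eq_val,
    ← castHom_apply (h := h), hcast, sub_eq_zero, Units.ext_iff, unitsMap_val, Units.val_one,
    cast_eq_val]

theorem card_ker_unitsMap_mul_totient [NeZero n] (h : p ∣ n) :
    Nat.card (unitsMap h).ker * φ p = φ n := by
  have : NeZero p := ⟨ne_zero_of_dvd_ne_zero (NeZero.ne n) h⟩
  have hindex : (unitsMap h).ker.index = φ p := by
    rw [Subgroup.index_ker, MonoidHom.range_eq_top.mpr (unitsMap_surjective h),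
      Subgroup.card_top, Nat.card_eq_fintype_card, card_units_eq_totient]
  rw [← hindex, Subgroup.card_mul_index, Nat.card_eq_fintype_card, card_units_eq_totient]

theorem card_ker_unitsMap_prime_pow (hp : p.Prime) (hm : m ≠ 0) :
    Nat.card (unitsMap (dvd_pow_self p hm)).ker = p ^ (m - 1) := by
  have : NeZero (p ^ m) := ⟨pow_ne_zero m hp.ne_zero⟩
  have h := card_ker_unitsMap_mul_totient (dvd_pow_self p hm)
  rw [Nat.totient_prime hp, Nat.totient_prime_pow hp (Nat.pos_of_ne_zero hm)] at h
  exact Nat.eq_of_mul_eq_mul_right (Nat.sub_pos_of_lt hp.one_lt) h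

theorem isUnit_iff_not_natCast_dvd (hp : p.Prime) (hm : m ≠ 0) (x : ZMod (p ^ m)) :
    IsUnit x ↔ ¬ (p : ZMod (p ^ m)) ∣ x := by
  have : NeZero (p ^ m) := ⟨pow_ne_zero m hp.ne_zero⟩
  rw [natCast_dvd_iff_dvd_val (dvd_pow_self p hm), ← isUnit_natCast_iff_not_dvd_pow hp
    (Nat.pos_of_ne_zero hm), natCast_zmod_val]

theorem not_natCast_dvd_sub_one_of_not_dvd_orderOf (hp : p.Prime) (hm : m ≠ 0)
    {u : (ZMod (p ^ m))ˣ} (hu : u ≠ 1) (hpu : ¬ p ∣ orderOf u) :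
    ¬ (p : ZMod (p ^ m)) ∣ (u : ZMod (p ^ m)) - 1 := by
  have : NeZero (p ^ m) := ⟨pow_ne_zero m hp.ne_zero⟩
  intro hdvd
  have hker : u ∈ (unitsMap (dvd_pow_self p hm)).ker :=
    (unitsMap_eq_one_iff_natCast_dvd_sub_one _ u).mpr hdvd
  have hord : orderOf u ∣ p ^ (m - 1) :=
    card_ker_unitsMap_prime_pow hp hm ▸ Subgroup.orderOf_dvd_natCard _ hker
  have hcop : (orderOf u).Coprime (p ^ (m - 1)) :=
    ((hp.coprime_iff_not_dvd.mpr hpu).symm).pow_right _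
  exact hu (orderOf_eq_one_iff.mp (hcop.eq_one_of_dvd hord))

end ZMod

theorem stmt_14_general (p m : ℕ) (hp : p.Prime) (hm : 1 ≤ m)
    (u : (ZMod (p ^ m))ˣ) (hu1 : u ≠ 1) (d : ℕ) (hd : orderOf u = d)
    (hpd : ¬ p ∣ d) :
    ¬ (p : ZMod (p ^ m)) ∣ ((u : ZMod (p ^ m)) - 1) ∧
      ∑ i ∈ Finset.range d, (u : ZMod (p ^ m)) ^ i = 0 := by
  have hm0 : m ≠ 0 := Nat.one_le_iff_ne_zero.mp hm
  have hndvd := ZMod.not_natCast_dvd_sub_one_of_not_dvd_orderOf hp hm0 hu1 (hd ▸ hpd)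
  refine ⟨hndvd, geom_sum_eq_zero_of_isUnit_sub_one ?_
    ((ZMod.isUnit_iff_not_natCast_dvd hp hm0 _).mpr hndvd)⟩
  rw [← hd, ← Units.val_pow_eq_pow_val, pow_orderOf_eq_one, Units.val_one]

/-- If `p` is an odd prime and `u ≠ 1` is a unit of `ℤ/p^mℤ` whose multiplicative
order `d` is coprime to `p`, then `p ∤ (u - 1)` and `p^m ∣ 1 + u + ⋯ + u^(d-1)`
(i.e. the sum vanishes in `ℤ/p^mℤ`). -/
theorem stmt_14 (p m : ℕ) (hp : p.Prime) (hodd : Odd p) (hm : 1 ≤ m)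
    (u : (ZMod (p ^ m))ˣ) (hu1 : u ≠ 1) (d : ℕ) (hd : orderOf u = d)
    (hpd : ¬ p ∣ d) :
    ¬ (p : ZMod (p ^ m)) ∣ ((u : ZMod (p ^ m)) - 1) ∧
      ∑ i ∈ Finset.range d, (u : ZMod (p ^ m)) ^ i = 0 :=
  stmt_14_general p m hp hm u hu1 d hd hpd
end
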